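/- For every integer r ≥ 1 there exists a finite solvable group G with derived length exactly 5r and Ω(|G|) = 7·(9^r − 1)/8, where Ω(|G|) is the number of prime factors of |G| counted with multiplicity. (Such a group is the r-fold iterated wreath product of G₉ = F₃² ⋊ GL(2, F₃), a transitive subgroup of S_{9^r}.) -/

import Mathlib

/-- `Omega n` is the number of prime factors of `n` counted with multiplicity,
usually denoted `Ω(n)`.  For a finite solvable group `G`, `Omega (Nat.card G)`
is the composition length of `G`. -/
def Omega (n : ℕ) : ℕ := n.primeFactorsList.length

/-- `DerivedLengthEq G d` says that the derived (solvable) length of `G` is exactly `d`: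
the `d`-th term of the derived series is trivial and no earlier term is trivial. -/
def DerivedLengthEq (G : Type*) [Group G] (d : ℕ) : Prop :=
  derivedSeries G d = ⊥ ∧ ∀ k < d, derivedSeries G k ≠ ⊥

/-!
`AGL(2, 3) = 𝔽₃² ⋊ GL(2, 3)`, with `GL(2, 3)` built as `(Q₈ ⋊ C₃) ⋊ C₂`, has order
`432 = 2⁴ · 3³` and derived length 5; the lower bound holds because `-1 ∈ GL(2, 3)⁽³⁾` acts on
`𝔽₃²` by inversion, so that every translation is a commutator of a translation with `-1`.

For a group `B` of derived length `d` let `W = (𝔽₃² → B) ⋊ AGL(2, 3)` be the wreath product.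
Then `W⁽⁵⁾` lies in the base `B⁹`, so `W⁽⁵⁺ᵈ⁾ = 1`. Conversely `W⁽⁵⁾ ∩ B⁹` maps onto each
coordinate `B`: starting from a function supported at one point, the commutators with suitable
elements `a_k ∈ AGL(2, 3)⁽ᵏ⁾`, `k < 5`, replace `f` by `x ↦ f x · f (a_k⁻¹ • x)⁻¹` and keep the
value at that point. Hence `W⁽⁵⁺ʲ⁾` maps onto `B⁽ʲ⁾`, and `W` has derived length exactly `5 + d`.
As `|W| = |B|⁹ · 432`, `Ω` becomes `9 Ω + 7`; iterating `r` times from the trivial group gives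
derived length `5r` and `Ω = 7 (9ʳ - 1) / 8`.
-/

open scoped commutatorElement

section DerivedSeries

variable {G H N : Type*} [Group G] [Group H] [Group N]

theorem derivedSeries_add_le_map {i : N →* G} {n : ℕ} (h : derivedSeries G n ≤ i.range)
    (s : ℕ) : derivedSeries G (n + s) ≤ (derivedSeries N s).map i := by
  induction s with
  | zero => simpa [← MonoidHom.range_eq_map] using h
  | succ s ih =>
    rw [← add_assoc, derivedSeries_succ, derivedSeries_succ, Subgroup.map_commutator]
    exact Subgroup.commutator_mono ih ih

theorem map_derivedSeries_le_derivedSeries_add {i : N →* G} {n : ℕ}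
    (h : i.range ≤ derivedSeries G n) (s : ℕ) :
    (derivedSeries N s).map i ≤ derivedSeries G (n + s) := by
  induction s with
  | zero => simpa [← MonoidHom.range_eq_map] using h
  | succ s ih =>
    rw [← add_assoc, derivedSeries_succ, derivedSeries_succ, Subgroup.map_commutator]
    exact Subgroup.commutator_mono ih ih

theorem commutatorElement_mem_derivedSeries_succ {n : ℕ} {x y : G}
    (hx : x ∈ derivedSeries G n) (hy : y ∈ derivedSeries G n) :
    ⁅x, y⁆ ∈ derivedSeries G (n + 1) :=
  Subgroup.commutator_mem_commutator hx hy

theorem derivedSeries_ne_bot_of_injective {f : G →* H} (hf : Function.Injective f) {k : ℕ}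
    (h : derivedSeries G k ≠ ⊥) : derivedSeries H k ≠ ⊥ := by
  intro hH
  apply h
  rw [← (Subgroup.map_injective hf).eq_iff, Subgroup.map_bot, eq_bot_iff, ← hH]
  exact map_derivedSeries_le_derivedSeries f k

theorem derivedSeries_pi_eq_bot {ι : Type*} {s : ℕ} (h : derivedSeries G s = ⊥) :
    derivedSeries (ι → G) s = ⊥ := by
  refine (Subgroup.eq_bot_iff_forall _).mpr fun f hf => funext fun x => ?_
  have := map_derivedSeries_le_derivedSeries (Pi.evalMonoidHom (fun _ : ι => G) x) s ⟨f, hf, rfl⟩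
  rwa [h] at this

theorem derivedSeries_one_eq_bot (A : Type*) [CommGroup A] : derivedSeries A 1 = ⊥ :=
  commutator_eq_bot A

theorem derivedSeries_two_eq_bot_of_commutator_mem_center
    (h : ∀ x y : G, ⁅x, y⁆ ∈ Subgroup.center G) : derivedSeries G 2 = ⊥ := by
  have h1 : derivedSeries G 1 ≤ Subgroup.center G := by
    rw [derivedSeries_one, commutator_def, Subgroup.commutator_le]
    exact fun x _ y _ => h x y
  rw [derivedSeries_succ, eq_bot_iff]
  refine (Subgroup.commutator_mono h1 h1).trans ?_
  rw [le_bot_iff, Subgroup.commutator_eq_bot_iff_le_centralizer]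
  exact Subgroup.center_le_centralizer _

end DerivedSeries

namespace SemidirectProduct

variable {N G : Type*} [Group N] [Group G] {φ : G →* MulAut N}

instance [Fintype N] [Fintype G] : Fintype (N ⋊[φ] G) :=
  Fintype.ofEquiv _ equivProd.symm

instance [Finite N] [Finite G] : Finite (N ⋊[φ] G) :=
  Finite.of_equiv _ equivProd.symm

theorem derivedSeries_add_eq_bot {n s : ℕ} (hG : derivedSeries G n = ⊥)
    (hN : derivedSeries N s = ⊥) : derivedSeries (N ⋊[φ] G) (n + s) = ⊥ := by
  have h : derivedSeries (N ⋊[φ] G) n ≤ (inl : N →* N ⋊[φ] G).range := by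
    rw [range_inl_eq_ker_rightHom, ← Subgroup.map_eq_bot_iff, eq_bot_iff, ← hG]
    exact map_derivedSeries_le_derivedSeries rightHom n
  simpa [hN] using derivedSeries_add_le_map h s

theorem commutatorElement_inl_inr (n : N) (g : G) :
    ⁅(inl n : N ⋊[φ] G), (inr g : N ⋊[φ] G)⁆ = inl (n * φ g n⁻¹) := by
  rw [commutatorElement_def, map_mul, inl_aut, map_inv, map_inv]
  group

instance : MulAction (N ⋊[φ] G) N where
  smul p x := p.left * φ p.right x
  one_smul x := show 1 * φ 1 x = x by simp
  mul_smul p q x := show (p * q).left * φ (p * q).right x =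
      p.left * φ p.right (q.left * φ q.right x) by simp [mul_assoc]

end SemidirectProduct

abbrev WreathProduct (B P Ω : Type*) [Group B] [Group P] [MulAction P Ω] :=
  (Ω → B) ⋊[mulAutArrow] P

namespace WreathProduct

open SemidirectProduct

variable {B P Ω : Type*} [Group B] [Group P] [MulAction P Ω]

theorem card [Finite Ω] :
    Nat.card (WreathProduct B P Ω) = Nat.card B ^ Nat.card Ω * Nat.card P := by
  rw [SemidirectProduct.card, Nat.card_fun]

theorem commutatorElement_inl_inr (f : Ω → B) (a : P) :
    ⁅(inl f : WreathProduct B P Ω), (inr a : WreathProduct B P Ω)⁆ =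
      inl fun x => f x * (f (a⁻¹ • x))⁻¹ := by
  rw [SemidirectProduct.commutatorElement_inl_inr]
  rfl

theorem exists_inl_mem_derivedSeries_succ [DecidableEq Ω] {k : ℕ} {a : P}
    (ha : a ∈ derivedSeries P k) {T : Finset Ω} {δ : Ω} {b : B} (hδ : a⁻¹ • δ ∉ T)
    (h : ∃ f : Ω → B, inl f ∈ derivedSeries (WreathProduct B P Ω) k ∧ f δ = b ∧
      ∀ γ ∉ T, f γ = 1) :
    ∃ f : Ω → B, inl f ∈ derivedSeries (WreathProduct B P Ω) (k + 1) ∧ f δ = b ∧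
      ∀ γ ∉ T ∪ T.image (a • ·), f γ = 1 := by
  obtain ⟨f, hf, hfδ, hfT⟩ := h
  refine ⟨fun x => f x * (f (a⁻¹ • x))⁻¹, ?_, by simp [hfδ, hfT _ hδ], fun γ hγ => ?_⟩
  · rw [← commutatorElement_inl_inr]
    exact commutatorElement_mem_derivedSeries_succ hf
      (map_derivedSeries_le_derivedSeries inr k ⟨a, ha, rfl⟩)
  · simp only [Finset.mem_union, Finset.mem_image, not_or, not_exists, not_and] at hγ
    have : a⁻¹ • γ ∉ T := fun h => hγ.2 _ h (smul_inv_smul a γ)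
    simp [hfT _ hγ.1, hfT _ this]

theorem derivedSeries_add_ne_bot {n j : ℕ} (δ : Ω)
    (hδ : ∀ b : B, ∃ f : Ω → B, inl f ∈ derivedSeries (WreathProduct B P Ω) n ∧ f δ = b)
    (hB : derivedSeries B j ≠ ⊥) : derivedSeries (WreathProduct B P Ω) (n + j) ≠ ⊥ := by
  let C : Subgroup (Ω → B) := (derivedSeries (WreathProduct B P Ω) n).comap inl
  have hC : ((inl : (Ω → B) →* WreathProduct B P Ω).comp C.subtype).range ≤
      derivedSeries _ n := by
    rintro _ ⟨c, rfl⟩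
    exact c.2
  have hsurj : Function.Surjective ((Pi.evalMonoidHom (fun _ : Ω => B) δ).comp C.subtype) :=
    fun b => let ⟨f, hf, hfδ⟩ := hδ b; ⟨⟨f, hf⟩, hfδ⟩
  have hCj : derivedSeries C j ≠ ⊥ := by
    rw [← map_derivedSeries_eq hsurj] at hB
    exact fun h => hB (by rw [h, Subgroup.map_bot])
  have hinj : Function.Injective ((inl : (Ω → B) →* WreathProduct B P Ω).comp C.subtype) :=
    inl_injective.comp C.subtype_injective
  intro h
  apply hCj
  rw [← (Subgroup.map_injective hinj).eq_iff, Subgroup.map_bot, eq_bot_iff, ← h]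
  exact map_derivedSeries_le_derivedSeries_add hC j

theorem derivedLengthEq {n d : ℕ} (hP : DerivedLengthEq P n) (δ : Ω)
    (hδ : ∀ b : B, ∃ f : Ω → B, inl f ∈ derivedSeries (WreathProduct B P Ω) n ∧ f δ = b)
    (hB : DerivedLengthEq B d) : DerivedLengthEq (WreathProduct B P Ω) (n + d) := by
  refine ⟨derivedSeries_add_eq_bot hP.1 (derivedSeries_pi_eq_bot hB.1), fun k hk => ?_⟩
  obtain hkn | hkn := lt_or_ge k n
  · exact derivedSeries_ne_bot_of_injective inr_injective (hP.2 k hkn)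
  · obtain ⟨j, rfl⟩ := Nat.exists_eq_add_of_le hkn
    exact derivedSeries_add_ne_bot δ hδ (hB.2 j (by omega))

end WreathProduct

namespace GL23

abbrev Q8 := QuaternionGroup 2
abbrev C3 := Multiplicative (ZMod 3)
abbrev C2 := Multiplicative (ZMod 2)

open QuaternionGroup

-- With `i = a 1`, `j = xa 0`, `k = xa 3`: `σ` permutes `i ↦ j ↦ k ↦ i`, and `τ` maps
-- `i ↦ -i`, `j ↦ -k`, inverting `σ` by conjugation.
def σ : MulAut Q8 where
  toFun
    | .a i => ![.a 0, .xa 0, .a 2, .xa 2] i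
    | .xa i => ![.xa 3, .a 3, .xa 1, .a 1] i
  invFun
    | .a i => ![.a 0, .xa 3, .a 2, .xa 1] i
    | .xa i => ![.a 1, .xa 2, .a 3, .xa 0] i
  left_inv := by decide
  right_inv := by decide
  map_mul' := by decide

def τ : MulAut Q8 where
  toFun
    | .a i => .a (-i)
    | .xa i => ![.xa 1, .xa 0, .xa 3, .xa 2] i
  invFun
    | .a i => .a (-i)
    | .xa i => ![.xa 1, .xa 0, .xa 3, .xa 2] i
  left_inv := by decide
  right_inv := by decide
  map_mul' := by decide

def φ₃ : C3 →* MulAut Q8 := MonoidHom.mk' (fun m => σ ^ m.toAdd.val) (by decide)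

abbrev SL := Q8 ⋊[φ₃] C3

def ψ : MulAut SL where
  toFun x := ⟨τ x.left, x.right⁻¹⟩
  invFun x := ⟨τ x.left, x.right⁻¹⟩
  left_inv := by decide
  right_inv := by decide
  map_mul' := by decide

def φ₂ : C2 →* MulAut SL := MonoidHom.mk' (fun e => ψ ^ e.toAdd.val) (by decide)

end GL23

abbrev GL23 := GL23.SL ⋊[GL23.φ₂] GL23.C2

namespace GL23

open SemidirectProduct

def i : GL23 := inl (inl (.a 1))
def j : GL23 := inl (inl (.xa 0))
def k : GL23 := inl (inl (.xa 3))
def negOne : GL23 := inl (inl (.a 2))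
def u : GL23 := inl (inr (.ofAdd 1))
def d : GL23 := inr (.ofAdd 1)

theorem derivedSeries_Q8_two_eq_bot : derivedSeries Q8 2 = ⊥ :=
  derivedSeries_two_eq_bot_of_commutator_mem_center (by decide)

theorem derivedSeries_four_eq_bot : derivedSeries GL23 4 = ⊥ :=
  derivedSeries_add_eq_bot (derivedSeries_one_eq_bot C2)
    (derivedSeries_add_eq_bot (derivedSeries_one_eq_bot C3) derivedSeries_Q8_two_eq_bot)

theorem u_mem : u ∈ derivedSeries GL23 1 := by
  rw [show u = ⁅d, u⁆ by decide]
  exact commutatorElement_mem_derivedSeries_succ (Subgroup.mem_top _) (Subgroup.mem_top _)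

theorem k_mem : k ∈ derivedSeries GL23 1 := by
  rw [show k = ⁅u, i⁆ by decide]
  exact commutatorElement_mem_derivedSeries_succ (Subgroup.mem_top _) (Subgroup.mem_top _)

theorem j_mem : j ∈ derivedSeries GL23 2 := by
  rw [show j = ⁅u, k⁆ by decide]
  exact commutatorElement_mem_derivedSeries_succ u_mem k_mem

theorem i_mem : i ∈ derivedSeries GL23 2 := by
  rw [show i = ⁅u, j⁆ by decide]
  exact commutatorElement_mem_derivedSeries_succ u_mem
    (derivedSeries_antitone GL23 (by norm_num) j_mem)

theorem negOne_mem : negOne ∈ derivedSeries GL23 3 := by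
  rw [show negOne = ⁅i, j⁆ by decide]
  exact commutatorElement_mem_derivedSeries_succ i_mem j_mem

abbrev Plane := Multiplicative (ZMod 3 × ZMod 3)

-- The matrices `[[0, -1], [1, 0]]`, `[[1, 1], [1, -1]]`, `[[1, 1], [0, 1]]`, `[[1, 0], [0, -1]]`,
-- images of `i`, `j`, `u`, `d` in the faithful representation of `GL23` on `𝔽₃²`.
def matI : MulAut Plane where
  toFun x := .ofAdd (-x.toAdd.2, x.toAdd.1)
  invFun x := .ofAdd (x.toAdd.2, -x.toAdd.1)
  left_inv := by decide
  right_inv := by decide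
  map_mul' := by decide

def matJ : MulAut Plane where
  toFun x := .ofAdd (x.toAdd.1 + x.toAdd.2, x.toAdd.1 - x.toAdd.2)
  invFun x := .ofAdd (-x.toAdd.1 - x.toAdd.2, -x.toAdd.1 + x.toAdd.2)
  left_inv := by decide
  right_inv := by decide
  map_mul' := by decide

def matU : MulAut Plane where
  toFun x := .ofAdd (x.toAdd.1 + x.toAdd.2, x.toAdd.2)
  invFun x := .ofAdd (x.toAdd.1 - x.toAdd.2, x.toAdd.2)
  left_inv := by decide
  right_inv := by decide
  map_mul' := by decide

def matD : MulAut Plane where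
  toFun x := .ofAdd (x.toAdd.1, -x.toAdd.2)
  invFun x := .ofAdd (x.toAdd.1, -x.toAdd.2)
  left_inv := by decide
  right_inv := by decide
  map_mul' := by decide

open QuaternionGroup in
def ρQ8 : Q8 →* MulAut Plane :=
  MonoidHom.mk' (fun
    | .a n => matI ^ n.val
    | .xa n => matJ * matI ^ n.val) (by decide)

def ρSL : SL →* MulAut Plane :=
  SemidirectProduct.lift ρQ8 (MonoidHom.mk' (fun m => matU ^ m.toAdd.val) (by decide))
    (by decide)

def ρ : GL23 →* MulAut Plane :=
  SemidirectProduct.lift ρSL (MonoidHom.mk' (fun e => matD ^ e.toAdd.val) (by decide))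
    (by decide)

end GL23

abbrev AGL23 := GL23.Plane ⋊[GL23.ρ] GL23

namespace AGL23

open SemidirectProduct GL23

theorem card : Nat.card AGL23 = 432 := by
  rw [SemidirectProduct.card, SemidirectProduct.card, SemidirectProduct.card]
  simp [Nat.card_eq_fintype_card, QuaternionGroup.card]

theorem range_inl_le_derivedSeries {n : ℕ} (hn : n ≤ 4) :
    (inl : Plane →* AGL23).range ≤ derivedSeries AGL23 n := by
  induction n with
  | zero => exact le_top
  | succ n ih =>
    rintro _ ⟨v, rfl⟩
    -- `negOne` acts on the plane as `v ↦ v⁻¹`, and `v = (v * v) * (v * v)` in `𝔽₃²`.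
    rw [show inl v = ⁅(inl (v * v) : AGL23), (inr negOne : AGL23)⁆ by revert v; decide]
    exact commutatorElement_mem_derivedSeries_succ (ih (by omega) ⟨v * v, rfl⟩)
      (map_derivedSeries_le_derivedSeries inr n
        ⟨negOne, derivedSeries_antitone GL23 (by omega) negOne_mem, rfl⟩)

def t₁ : AGL23 := inl (.ofAdd (1, 0))
def t₂ : AGL23 := inl (.ofAdd (0, 1))

theorem t₁_mem {n : ℕ} (hn : n ≤ 4) : t₁ ∈ derivedSeries AGL23 n :=
  range_inl_le_derivedSeries hn ⟨_, rfl⟩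

theorem t₂_mem {n : ℕ} (hn : n ≤ 4) : t₂ ∈ derivedSeries AGL23 n :=
  range_inl_le_derivedSeries hn ⟨_, rfl⟩

theorem t₁_mul_i_mem : t₁ * inr i ∈ derivedSeries AGL23 1 :=
  mul_mem (t₁_mem (by norm_num))
    (map_derivedSeries_le_derivedSeries inr 1
      ⟨i, derivedSeries_antitone GL23 (by norm_num) i_mem, rfl⟩)

theorem derivedLengthEq : DerivedLengthEq AGL23 5 :=
  ⟨derivedSeries_add_eq_bot derivedSeries_four_eq_bot (derivedSeries_one_eq_bot Plane),
    fun n hn h => (by decide : t₁ ≠ 1) (Subgroup.mem_bot.mp (h ▸ t₁_mem (by omega)))⟩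

theorem exists_inl_mem_derivedSeries_five {B : Type*} [Group B] (b : B) :
    ∃ f : Plane → B, inl f ∈ derivedSeries (WreathProduct B AGL23 Plane) 5 ∧ f 1 = b := by
  have h₀ : ∃ f : Plane → B, inl f ∈ derivedSeries (WreathProduct B AGL23 Plane) 0 ∧
      f 1 = b ∧ ∀ γ ∉ ({1} : Finset Plane), f γ = 1 :=
    ⟨Pi.mulSingle 1 b, Subgroup.mem_top _, by simp, fun γ hγ => by simp_all⟩
  -- Each `decide` checks that `a⁻¹ • 1` lies outside the support accumulated so far.
  open WreathProduct in
  have h₁ := exists_inl_mem_derivedSeries_succ (t₁_mem (by norm_num)) (by decide) h₀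
  have h₂ := exists_inl_mem_derivedSeries_succ t₁_mul_i_mem (by decide) h₁
  have h₃ := exists_inl_mem_derivedSeries_succ (t₁_mem (by norm_num)) (by decide) h₂
  have h₄ := exists_inl_mem_derivedSeries_succ (t₂_mem (by norm_num)) (by decide) h₃
  have h₅ := exists_inl_mem_derivedSeries_succ (t₂_mem (by norm_num)) (by decide) h₄
  obtain ⟨f, hf, hfδ, -⟩ := h₅
  exact ⟨f, hf, hfδ⟩

end AGL23

theorem Omega_card_wreathProduct_AGL23 (B : Type*) [Group B] [Finite B] :
    Omega (Nat.card (WreathProduct B AGL23 GL23.Plane)) = 9 * Omega (Nat.card B) + 7 := by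
  have hB : Nat.card B ≠ 0 := Nat.card_pos.ne'
  have h432 : Omega 432 = 7 := by simp [Omega]
  simp only [Omega, ← ArithmeticFunction.cardFactors_apply] at h432 ⊢
  rw [WreathProduct.card, AGL23.card, ArithmeticFunction.cardFactors_mul (pow_ne_zero _ hB)
    (by norm_num), ArithmeticFunction.cardFactors_pow, h432]
  simp [Nat.card_eq_fintype_card]

theorem exists_derivedLengthEq_five_mul (r : ℕ) :
    ∃ (G : Type) (_ : Group G) (_ : Finite G),
      DerivedLengthEq G (5 * r) ∧ 8 * Omega (Nat.card G) + 7 = 7 * 9 ^ r := by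
  induction r with
  | zero => exact ⟨Unit, inferInstance, inferInstance, ⟨Subsingleton.elim _ _, by simp⟩,
      by simp [Omega]⟩
  | succ r ih =>
    obtain ⟨B, _, _, hB, hΩ⟩ := ih
    refine ⟨WreathProduct B AGL23 GL23.Plane, inferInstance, inferInstance, ?_, ?_⟩
    · rw [mul_add_one, add_comm]
      exact WreathProduct.derivedLengthEq AGL23.derivedLengthEq 1
        AGL23.exists_inl_mem_derivedSeries_five hB
    · rw [Omega_card_wreathProduct_AGL23, pow_succ]
      omega

theorem exists_solvable_derived_length_five_mul_general (r : ℕ) :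
    ∃ (G : Type) (_ : Group G) (_ : Finite G), IsSolvable G ∧
      DerivedLengthEq G (5 * r) ∧ Omega (Nat.card G) = 7 * (9 ^ r - 1) / 8 := by
  obtain ⟨G, _, _, hG, hΩ⟩ := exists_derivedLengthEq_five_mul r
  exact ⟨G, ‹_›, ‹_›, ⟨_, hG.1⟩, hG, by omega⟩

/-- For every `r ≥ 1` there is a finite solvable group with derived length exactly `5r`
and composition length `7·(9^r − 1)/8` (e.g. the `r`-fold iterated wreath product of
`G₉ = F₃² ⋊ GL(2, F₃)`). -/
theorem exists_solvable_derived_length_five_mul (r : ℕ) (hr : 1 ≤ r) :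
    ∃ (G : Type) (_ : Group G) (_ : Finite G), IsSolvable G ∧
      DerivedLengthEq G (5 * r) ∧ Omega (Nat.card G) = 7 * (9 ^ r - 1) / 8 :=
  exists_solvable_derived_length_five_mul_general r
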